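/- Let k be a positive integer and let m ≤ n be integers with n − m + 1 = 4k. Then the set of consecutive integers [m,n] can be partitioned into 2k pairs such that the set of pair sums is exactly the set of 2k−1 consecutive integers {m+n−k, m+n−k+1, ..., m+n+k−2} together with the single additional value m+n+2k−1. -/

import Mathlib

/-!
Shift `[m, n]` to offsets `[0, 4k-1]`. For `i < k` pair `i` with `3k-1+i` (sums `3k-1+2i`), for
`i < k-1` pair `k+i` with `2k+i` (sums `3k+2i`), and pair `2k-1` with `4k-1` (sum `6k-2`).
Together these `2k` pairs cover `[0, 4k-1]` and their sums are `[3k-1, 5k-3] ∪ {6k-2}`, i.e.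
`[m+n-k, m+n+k-2] ∪ {m+n+2k-1}` after shifting back. In `jumpLow`/`jumpHigh` the pairs are
indexed by `j < 2k`: `j = 2i` and `j = 2i+1` are the two families, `j = 2k-1` the jump, so that
pair `j < 2k-1` has offset sum `3k-1+j`.
-/

open Finset

section PairFamily

variable {ι α : Type*} [DecidableEq α] {s : Finset ι} {a b : ι → α}

def pairFamily (s : Finset ι) (a b : ι → α) : Finset (Finset α) :=
  s.image fun j => {a j, b j}

theorem mem_pairFamily {p : Finset α} :
    p ∈ pairFamily s a b ↔ ∃ j ∈ s, {a j, b j} = p :=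
  mem_image

theorem injOn_pair (ha : Set.InjOn a s) (hab : ∀ i ∈ s, ∀ j ∈ s, a i ≠ b j) :
    Set.InjOn (fun j => ({a j, b j} : Finset α)) s := by
  intro i hi j hj (hij : ({a i, b i} : Finset α) = {a j, b j})
  have hmem : a i ∈ ({a j, b j} : Finset α) := hij ▸ mem_insert_self _ _
  rcases mem_insert.mp hmem with h | h
  · exact ha hi hj h
  · exact absurd (mem_singleton.mp h) (hab i hi j hj)

theorem card_pairFamily (ha : Set.InjOn a s) (hab : ∀ i ∈ s, ∀ j ∈ s, a i ≠ b j) :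
    (pairFamily s a b).card = s.card :=
  card_image_of_injOn (injOn_pair ha hab)

theorem card_of_mem_pairFamily (hab : ∀ i ∈ s, ∀ j ∈ s, a i ≠ b j) {p : Finset α}
    (hp : p ∈ pairFamily s a b) : p.card = 2 := by
  obtain ⟨j, hj, rfl⟩ := mem_pairFamily.mp hp
  exact card_pair (hab j hj j hj)

theorem disjoint_of_mem_pairFamily (ha : Set.InjOn a s) (hb : Set.InjOn b s)
    (hab : ∀ i ∈ s, ∀ j ∈ s, a i ≠ b j) {p q : Finset α} (hp : p ∈ pairFamily s a b)
    (hq : q ∈ pairFamily s a b) (hpq : p ≠ q) : Disjoint p q := by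
  obtain ⟨i, hi, rfl⟩ := mem_pairFamily.mp hp
  obtain ⟨j, hj, rfl⟩ := mem_pairFamily.mp hq
  have hij : i ≠ j := by rintro rfl; exact hpq rfl
  simp only [disjoint_insert_left, disjoint_insert_right, disjoint_singleton, mem_insert,
    mem_singleton, not_or]
  exact ⟨⟨fun h => hij (ha hi hj h.symm), hab j hj i hi⟩, hab i hi j hj,
    fun h => hij (hb hi hj h)⟩

theorem biUnion_pairFamily : (pairFamily s a b).biUnion id = s.image a ∪ s.image b := by
  ext x
  simp [pairFamily, and_or_left, exists_or, eq_comm]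

theorem card_image_union_image (ha : Set.InjOn a s) (hb : Set.InjOn b s)
    (hab : ∀ i ∈ s, ∀ j ∈ s, a i ≠ b j) : (s.image a ∪ s.image b).card = 2 * s.card := by
  have hdisj : Disjoint (s.image a) (s.image b) := by
    simp only [disjoint_left, mem_image]
    rintro _ ⟨i, hi, rfl⟩ ⟨j, hj, h⟩
    exact hab i hi j hj h.symm
  rw [card_union_of_disjoint hdisj, card_image_of_injOn ha, card_image_of_injOn hb, two_mul]

theorem image_sum_pairFamily [AddCommMonoid α]
    (hab : ∀ i ∈ s, ∀ j ∈ s, a i ≠ b j) :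
    (pairFamily s a b).image (fun p => p.sum id) = s.image (a + b) := by
  rw [pairFamily, image_image]
  refine image_congr fun j hj => ?_
  simp only [Function.comp_apply, Pi.add_apply, sum_pair (hab j hj j hj), id]

end PairFamily

section JumpPairing

def jumpLow (k : ℕ) (m : ℤ) (j : ℕ) : ℤ :=
  m + ((if j = 2 * k - 1 then 2 * k - 1 else if j % 2 = 0 then j / 2 else k + j / 2 : ℕ) : ℤ)

def jumpHigh (k : ℕ) (m : ℤ) (j : ℕ) : ℤ :=
  m + ((if j = 2 * k - 1 then 4 * k - 1 else if j % 2 = 0 then 3 * k - 1 + j / 2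
    else 2 * k + j / 2 : ℕ) : ℤ)

variable {k : ℕ} {m : ℤ}

theorem jumpLow_injOn : Set.InjOn (jumpLow k m) (range (2 * k)) := by
  intro i hi j hj h
  simp only [coe_range, Set.mem_Iio] at hi hj
  unfold jumpLow at h
  split_ifs at h <;> omega

theorem jumpHigh_injOn : Set.InjOn (jumpHigh k m) (range (2 * k)) := by
  intro i hi j hj h
  simp only [coe_range, Set.mem_Iio] at hi hj
  unfold jumpHigh at h
  split_ifs at h <;> omega

theorem jumpLow_ne_jumpHigh : ∀ i ∈ range (2 * k), ∀ j ∈ range (2 * k),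
    jumpLow k m i ≠ jumpHigh k m j := by
  intro i hi j hj
  simp only [mem_range] at hi hj
  unfold jumpLow jumpHigh
  split_ifs <;> omega

theorem image_jumpLow_union_image_jumpHigh {n : ℤ} (hcard : n - m + 1 = 4 * (k : ℤ)) :
    (range (2 * k)).image (jumpLow k m) ∪ (range (2 * k)).image (jumpHigh k m) = Icc m n := by
  have hsub : (range (2 * k)).image (jumpLow k m) ∪ (range (2 * k)).image (jumpHigh k m) ⊆
      Icc m n := by
    simp only [union_subset_iff, image_subset_iff, mem_range, mem_Icc]
    refine ⟨fun j hj => ?_, fun j hj => ?_⟩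
    · unfold jumpLow; split_ifs <;> omega
    · unfold jumpHigh; split_ifs <;> omega
  refine eq_of_subset_of_card_le hsub ?_
  rw [card_image_union_image jumpLow_injOn jumpHigh_injOn jumpLow_ne_jumpHigh, card_range,
    Int.card_Icc]
  omega

theorem image_jumpLow_add_jumpHigh (hk : 0 < k) {n : ℤ} (hcard : n - m + 1 = 4 * (k : ℤ)) :
    (range (2 * k)).image (jumpLow k m + jumpHigh k m) =
      Icc (m + n - k) (m + n + k - 2) ∪ {m + n + 2 * (k : ℤ) - 1} := by
  ext x
  simp only [mem_image, mem_range, Pi.add_apply, mem_union, mem_Icc, mem_singleton]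
  unfold jumpLow jumpHigh
  constructor
  · rintro ⟨j, hj, rfl⟩
    split_ifs <;> omega
  · rintro (⟨hlo, hhi⟩ | rfl)
    · refine ⟨(x - (m + n - k)).toNat, by omega, ?_⟩
      split_ifs <;> omega
    · exact ⟨2 * k - 1, by omega, by simp only [if_true]; omega⟩

end JumpPairing

theorem pair_sums_interval_4k_consecutive_with_jump_general (k : ℕ) (hk : 0 < k)
    (m n : ℤ) (hcard : n - m + 1 = 4 * (k : ℤ)) :
    ∃ P : Finset (Finset ℤ),
      P.card = 2 * k ∧
      (∀ p ∈ P, p.card = 2) ∧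
      (∀ p ∈ P, ∀ q ∈ P, p ≠ q → Disjoint p q) ∧
      P.biUnion id = Finset.Icc m n ∧
      P.image (fun p => p.sum id) =
        Finset.Icc (m + n - (k : ℤ)) (m + n + (k : ℤ) - 2) ∪ {m + n + 2 * (k : ℤ) - 1} := by
  have ha : Set.InjOn (jumpLow k m) (range (2 * k)) := jumpLow_injOn
  have hb : Set.InjOn (jumpHigh k m) (range (2 * k)) := jumpHigh_injOn
  have hab := jumpLow_ne_jumpHigh (k := k) (m := m)
  refine ⟨pairFamily (range (2 * k)) (jumpLow k m) (jumpHigh k m), ?_, ?_, ?_, ?_, ?_⟩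
  · rw [card_pairFamily ha hab, card_range]
  · exact fun p => card_of_mem_pairFamily hab
  · exact fun p hp q hq => disjoint_of_mem_pairFamily ha hb hab hp hq
  · rw [biUnion_pairFamily, image_jumpLow_union_image_jumpHigh hcard]
  · rw [image_sum_pairFamily hab, image_jumpLow_add_jumpHigh hk hcard]

/-- For `m ≤ n` with `n - m + 1 = 4k` (`k ≥ 1`), the set `[m,n]` can be partitioned into
`2k` pairs such that the set of pair sums is exactly
`{m+n-k, ..., m+n+k-2} ∪ {m+n+2k-1}`. -/
theorem pair_sums_interval_4k_consecutive_with_jump (k : ℕ) (hk : 0 < k)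
    (m n : ℤ) (hmn : m ≤ n) (hcard : n - m + 1 = 4 * (k : ℤ)) :
    ∃ P : Finset (Finset ℤ),
      P.card = 2 * k ∧
      (∀ p ∈ P, p.card = 2) ∧
      (∀ p ∈ P, ∀ q ∈ P, p ≠ q → Disjoint p q) ∧
      P.biUnion id = Finset.Icc m n ∧
      P.image (fun p => p.sum id) =
        Finset.Icc (m + n - (k : ℤ)) (m + n + (k : ℤ) - 2) ∪ {m + n + 2 * (k : ℤ) - 1} :=
  pair_sums_interval_4k_consecutive_with_jump_general k hk m n hcard
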